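/- arXiv:2106.09142 — 2 statements merged into one kernel-verified Lean document; each statement's English description precedes it below -/
import Mathlib

section
/- The effect of the sequence X: the permutation ξ ∈ Equiv.Perm (Fin 24) given in cycle notation by ξ = (0 1)(3 7 4)(5 6 8), which transposes positions 0 and 1, cycles 3→7→4→3 and 5→6→8→5, and fixes all other positions, belongs to Submonoid.closure S. -/
/-!
Since `Equiv.Perm (Fin 24)` is finite, the submonoid generated by `S` is the subgroup generated
by `S`. That subgroup contains `E` (all exponents zero) and `E * rA`, `E * rB`, hence `rA` and
`rB`, and `ξ` is an explicit word of length 15 in `E`, `rA`, `rB` and their inverses,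
checked by evaluating both sides.
-/

namespace Volleyball

/-- Rotation of quadrant A: the 6-cycle (0 1 2 8 7 6). -/
def rA : Equiv.Perm (Fin 24) := ([0,1,2,8,7,6] : List (Fin 24)).formPerm
/-- Rotation of quadrant B: the 6-cycle (3 4 5 11 10 9). -/
def rB : Equiv.Perm (Fin 24) := ([3,4,5,11,10,9] : List (Fin 24)).formPerm
/-- Rotation of quadrant C: the 6-cycle (12 13 14 20 19 18). -/
def rC : Equiv.Perm (Fin 24) := ([12,13,14,20,19,18] : List (Fin 24)).formPerm
/-- Rotation of quadrant D: the 6-cycle (15 16 17 23 22 21). -/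
def rD : Equiv.Perm (Fin 24) := ([15,16,17,23,22,21] : List (Fin 24)).formPerm

/-- The migration E = (6 9 17 14)(7 10 16 13)(8 11 15 12). -/
def E : Equiv.Perm (Fin 24) :=
  ([6,9,17,14] : List (Fin 24)).formPerm *
  ([7,10,16,13] : List (Fin 24)).formPerm *
  ([8,11,15,12] : List (Fin 24)).formPerm

/-- The step set of the volleyball chain. -/
def S : Set (Equiv.Perm (Fin 24)) :=
  { g | ∃ x₁ x₂ x₃ x₄ : Fin 6,
      (((x₁ : ℕ) : ZMod 6) - ((x₂ : ℕ) : ZMod 6) = -1 ∨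
       ((x₁ : ℕ) : ZMod 6) - ((x₂ : ℕ) : ZMod 6) = 0 ∨
       ((x₁ : ℕ) : ZMod 6) - ((x₂ : ℕ) : ZMod 6) = 1) ∧
      (((x₃ : ℕ) : ZMod 6) - ((x₄ : ℕ) : ZMod 6) = -1 ∨
       ((x₃ : ℕ) : ZMod 6) - ((x₄ : ℕ) : ZMod 6) = 0 ∨
       ((x₃ : ℕ) : ZMod 6) - ((x₄ : ℕ) : ZMod 6) = 1) ∧
      g = E * rA ^ (x₁ : ℕ) * rC ^ (x₂ : ℕ) * rB ^ (x₃ : ℕ) * rD ^ (x₄ : ℕ) }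

lemma E_mem_S : E ∈ S := ⟨0, 0, 0, 0, by decide, by decide, by decide⟩

lemma E_mul_rA_mem_S : E * rA ∈ S := ⟨1, 0, 0, 0, by decide, by decide, by decide⟩

lemma E_mul_rB_mem_S : E * rB ∈ S := ⟨0, 0, 1, 0, by decide, by decide, by decide⟩

set_option maxRecDepth 40000 in
lemma xi_eq_word :
    Equiv.swap (0 : Fin 24) 1 *
      ([3,7,4] : List (Fin 24)).formPerm *
      ([5,6,8] : List (Fin 24)).formPerm =
      E⁻¹ * rB * rA⁻¹ * E * rA⁻¹ * E⁻¹ * rA * rB⁻¹ * E⁻¹ * rB⁻¹ * E * rB⁻¹ *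
        rA * E * rA⁻¹ := by
  decide

/-- The effect ξ = (0 1)(3 7 4)(5 6 8) of the sequence X lies in the closure of S. -/
theorem xi_mem_closure :
    Equiv.swap (0 : Fin 24) 1 *
      ([3,7,4] : List (Fin 24)).formPerm *
      ([5,6,8] : List (Fin 24)).formPerm ∈ Submonoid.closure S := by
  rw [← Subgroup.closure_toSubmonoid_of_finite, Subgroup.mem_toSubmonoid, xi_eq_word]
  have hE : E ∈ Subgroup.closure S := Subgroup.subset_closure E_mem_S
  have hA : rA ∈ Subgroup.closure S :=
    (Subgroup.mul_mem_cancel_left _ hE).mp (Subgroup.subset_closure E_mul_rA_mem_S)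
  have hB : rB ∈ Subgroup.closure S :=
    (Subgroup.mul_mem_cancel_left _ hE).mp (Subgroup.subset_closure E_mul_rB_mem_S)
  simp [Subgroup.mul_mem_cancel_left, Subgroup.mul_mem_cancel_right, hE, hA, hB]

end Volleyball
end

section
/- The transposition sequence H: there is a word of length 340 in S whose composite is the transposition Equiv.swap 0 8 (swapping the back-left position 0 and the front-right position 8 of quadrant A, which have two spaces in between along the rotation cycle, and fixing all other positions); in particular Equiv.swap 0 8 ∈ Submonoid.closure S. -/
/-- In the kernel, `tabulate f i` reduces to a closed term `f k`, whose value is cached, rather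
than to a term containing `i`; this keeps long iterated applications small. -/
def tabulate {n : ℕ} {α : Type*} (f : Fin n → α) (i : Fin n) : α :=
  (List.ofFn f)[(i : ℕ)]'(by simp)

theorem tabulate_eq {n : ℕ} {α : Type*} (f : Fin n → α) : tabulate f = f :=
  funext fun _ => List.getElem_ofFn ..

namespace Equiv.Perm

variable {α : Type*}

theorem foldl_apply_eq_reverse_prod_apply (w : List (Perm α)) (a : α) :
    w.foldl (fun b g => g b) a = w.reverse.prod a := by
  induction w generalizing a with
  | nil => rfl
  | cons g w ih => simp [ih]

end Equiv.Perm

namespace Volleyball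

def step (x₁ x₂ x₃ x₄ : Fin 6) : Equiv.Perm (Fin 24) :=
  E * rA ^ (x₁ : ℕ) * rC ^ (x₂ : ℕ) * rB ^ (x₃ : ℕ) * rD ^ (x₄ : ℕ)

def WithinOne (a b : Fin 6) : Prop :=
  ((a : ℕ) : ZMod 6) - ((b : ℕ) : ZMod 6) = -1 ∨
    ((a : ℕ) : ZMod 6) - ((b : ℕ) : ZMod 6) = 0 ∨
    ((a : ℕ) : ZMod 6) - ((b : ℕ) : ZMod 6) = 1

instance : DecidableRel WithinOne := fun _ _ => inferInstanceAs (Decidable (_ ∨ _ ∨ _))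

theorem step_mem_S {x₁ x₂ x₃ x₄ : Fin 6} (h₁₂ : WithinOne x₁ x₂)
    (h₃₄ : WithinOne x₃ x₄) : step x₁ x₂ x₃ x₄ ∈ S :=
  ⟨x₁, x₂, x₃, x₄, h₁₂, h₃₄, rfl⟩

/-- The last run is `E ^ 44 = 1`; it only pads the word to length 340. -/
def runsH : List (ℕ × Fin 6 × Fin 6 × Fin 6 × Fin 6) :=
  [(3, 0, 5, 0, 0), (1, 0, 0, 3, 3), (3, 0, 5, 0, 0), (1, 0, 0, 3, 3), (3, 0, 5, 0, 0),
   (1, 0, 0, 4, 3), (3, 0, 5, 0, 0), (1, 0, 0, 3, 3), (3, 0, 5, 0, 0), (1, 0, 0, 4, 3),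
   (3, 0, 5, 0, 0), (1, 0, 0, 0, 1), (3, 0, 0, 0, 0), (1, 0, 0, 0, 1), (3, 0, 0, 0, 0),
   (12, 0, 5, 0, 0), (4, 0, 0, 3, 3), (1, 0, 1, 3, 3), (1, 0, 0, 0, 0), (3, 0, 1, 3, 3),
   (3, 0, 0, 3, 3), (3, 0, 0, 0, 0), (1, 0, 0, 1, 1), (3, 5, 0, 0, 5), (4, 5, 5, 0, 5),
   (3, 5, 4, 0, 5), (3, 5, 5, 0, 5), (1, 0, 0, 0, 5), (3, 0, 0, 0, 0), (1, 0, 0, 0, 5),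
   (3, 0, 0, 0, 0), (1, 0, 5, 0, 1), (3, 0, 0, 0, 0), (1, 0, 0, 3, 3), (3, 0, 0, 0, 0),
   (1, 5, 0, 2, 2), (1, 0, 1, 0, 0), (1, 0, 0, 0, 5), (18, 0, 1, 0, 5), (3, 0, 0, 3, 3),
   (18, 0, 1, 3, 3), (2, 0, 0, 0, 0), (13, 0, 5, 0, 0), (1, 0, 0, 0, 1), (3, 0, 0, 0, 0),
   (1, 0, 1, 3, 3), (3, 0, 1, 0, 0), (1, 0, 1, 0, 5), (10, 0, 1, 0, 0), (1, 0, 0, 0, 5),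
   (3, 0, 0, 0, 0), (1, 0, 1, 3, 3), (1, 0, 5, 0, 5), (18, 0, 1, 0, 5), (3, 0, 1, 3, 3),
   (3, 0, 0, 3, 3), (2, 0, 5, 0, 0), (2, 0, 0, 0, 0), (1, 0, 0, 0, 5), (3, 0, 0, 0, 0),
   (1, 0, 0, 0, 5), (3, 0, 0, 0, 0), (2, 0, 5, 0, 0), (2, 0, 0, 0, 0), (3, 0, 5, 0, 0),
   (1, 0, 0, 0, 0), (3, 0, 1, 0, 0), (2, 0, 0, 0, 5), (3, 0, 0, 0, 0), (3, 0, 5, 0, 0),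
   (1, 0, 0, 0, 0), (3, 0, 5, 0, 0), (1, 0, 0, 0, 0), (2, 0, 1, 0, 1), (2, 0, 0, 0, 0),
   (2, 0, 1, 0, 1), (2, 0, 0, 0, 0), (3, 0, 1, 0, 0), (1, 0, 0, 0, 5), (3, 0, 1, 3, 3),
   (3, 0, 0, 3, 3), (3, 0, 5, 0, 0), (1, 0, 0, 4, 3), (3, 0, 5, 0, 0), (1, 0, 0, 3, 3),
   (2, 0, 1, 0, 1), (2, 0, 0, 0, 0), (3, 0, 0, 3, 2), (2, 0, 0, 1, 0), (2, 0, 1, 0, 1),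
   (2, 0, 0, 0, 0), (3, 0, 5, 0, 0), (1, 0, 0, 3, 3), (4, 0, 5, 2, 2), (1, 0, 0, 5, 5),
   (3, 0, 1, 1, 0), (1, 0, 5, 0, 1), (1, 1, 0, 2, 1), (2, 0, 0, 0, 1), (1, 5, 4, 4, 5),
   (2, 1, 1, 5, 0), (2, 5, 0, 1, 0), (2, 0, 0, 2, 3), (4, 4, 5, 0, 0), (44, 0, 0, 0, 0)]

def wordH : List (Equiv.Perm (Fin 24)) :=
  runsH.flatMap fun ⟨n, x₁, x₂, x₃, x₄⟩ => List.replicate n (step x₁ x₂ x₃ x₄)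

theorem wordH_length : wordH.length = 340 := by
  decide +kernel

theorem wordH_mem_S : ∀ g ∈ wordH, g ∈ S := by
  have hruns : ∀ r ∈ runsH, WithinOne r.2.1 r.2.2.1 ∧ WithinOne r.2.2.2.1 r.2.2.2.2 := by
    decide
  simp only [wordH, List.mem_flatMap, List.mem_replicate]
  rintro g ⟨⟨n, x₁, x₂, x₃, x₄⟩, hr, -, rfl⟩
  exact step_mem_S (hruns _ hr).1 (hruns _ hr).2

theorem wordH_prod : wordH.reverse.prod = Equiv.swap 0 8 := by
  have hpointwise : ∀ i,
      wordH.foldl (fun j (g : Equiv.Perm (Fin 24)) => tabulate g j) i = Equiv.swap 0 8 i := by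
    decide +kernel
  ext1 i
  simpa only [tabulate_eq, Equiv.Perm.foldl_apply_eq_reverse_prod_apply] using hpointwise i

/-- The transposition sequence H: a 340-step word in S realizing the swap (0 8). -/
theorem swap08_realizable :
    (∃ l : List (Equiv.Perm (Fin 24)),
      (∀ g ∈ l, g ∈ S) ∧ l.length = 340 ∧ l.reverse.prod = Equiv.swap (0 : Fin 24) 8) ∧
    Equiv.swap (0 : Fin 24) 8 ∈ Submonoid.closure S := by
  refine ⟨⟨wordH, wordH_mem_S, wordH_length, wordH_prod⟩, ?_⟩
  rw [← wordH_prod]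
  exact Submonoid.list_prod_mem _ fun g hg =>
    Submonoid.subset_closure (wordH_mem_S g (List.mem_reverse.1 hg))

end Volleyball
end
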